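/- Let A be an n×n symmetric matrix with constant off-diagonal blocks and diagonal blocks A_{k,k} satisfying A_{k,k} − m(A_{k,k})·J_{n_k} ⪰ 0 (as in the class B̃_p). Then A is positive definite if and only if the block average matrix φ(A) is positive definite and every diagonal block A_{k,k} is positive definite. -/

import Mathlib

/-!
Let `P` be the `0/1` matrix whose columns are the indicator vectors of the blocks. If the
off-diagonal blocks of `A` are constant, then `A = P φ(A) Pᴴ + blockDiag (A_kk - m(A_kk) J)`.
Both summands are positive semidefinite. When `φ(A)` is positive definite the first is positive
on every vector with a nonzero block sum; on vectors whose block sums all vanish, `J` acts as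
zero, so the second summand agrees with `blockDiag (A_kk)`, which is positive definite when every
`A_kk` is. Conversely, each `A_kk` is a principal submatrix of `A`, and `φ(A) = Qᴴ A Q` for the
injective `Q = P · diag (1 / n_k)`.
-/

namespace Matrix

variable {κ : Type*} {β : κ → Type*}

section BlockDiagonal

variable [Fintype κ] [DecidableEq κ] [∀ k, Fintype (β k)]

theorem blockDiagonal'_mulVec_apply {α : Type*} [NonUnitalNonAssocSemiring α]
    (M : ∀ k, Matrix (β k) (β k) α) (x : (Σ k, β k) → α) (a : Σ k, β k) :
    (blockDiagonal' M *ᵥ x) a = (M a.1 *ᵥ fun i => x ⟨a.1, i⟩) a.2 := by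
  obtain ⟨k, i⟩ := a
  simp only [mulVec, dotProduct, Fintype.sum_sigma]
  rw [Fintype.sum_eq_single k fun l hl => by simp [blockDiagonal'_apply_ne _ _ _ (Ne.symm hl)]]
  simp [blockDiagonal'_apply_eq]

theorem dotProduct_blockDiagonal'_mulVec {α : Type*} [NonUnitalNonAssocSemiring α]
    (M : ∀ k, Matrix (β k) (β k) α) (x y : (Σ k, β k) → α) :
    x ⬝ᵥ blockDiagonal' M *ᵥ y = ∑ k, (fun i => x ⟨k, i⟩) ⬝ᵥ M k *ᵥ fun i => y ⟨k, i⟩ := by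
  simp [dotProduct, Fintype.sum_sigma, blockDiagonal'_mulVec_apply]

variable {R : Type*} [CommRing R] [PartialOrder R] [StarRing R] [IsOrderedAddMonoid R]
  {M : ∀ k, Matrix (β k) (β k) R}

theorem PosSemidef.blockDiagonal' (hM : ∀ k, (M k).PosSemidef) :
    (blockDiagonal' M).PosSemidef := by
  refine posSemidef_iff_dotProduct_mulVec.2
    ⟨isHermitian_blockDiagonal'_iff.2 fun k => (hM k).1, fun x => ?_⟩
  rw [dotProduct_blockDiagonal'_mulVec]
  exact Finset.sum_nonneg fun k _ => (hM k).dotProduct_mulVec_nonneg _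

theorem PosDef.blockDiagonal' (hM : ∀ k, (M k).PosDef) : (blockDiagonal' M).PosDef := by
  refine of_dotProduct_mulVec_pos
    (isHermitian_blockDiagonal'_iff.2 fun k => (hM k).1) fun x hx => ?_
  obtain ⟨⟨k, i⟩, hki⟩ := Function.ne_iff.1 hx
  rw [dotProduct_blockDiagonal'_mulVec]
  exact Finset.sum_pos' (fun l _ => (hM l).posSemidef.dotProduct_mulVec_nonneg _)
    ⟨k, Finset.mem_univ k, (hM k).dotProduct_mulVec_pos (Function.ne_iff.2 ⟨i, hki⟩)⟩

end BlockDiagonal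

theorem PosDef.blockDiag' {R : Type*} [Ring R] [PartialOrder R] [StarRing R]
    {A : Matrix (Σ k, β k) (Σ k, β k) R} (hA : A.PosDef) (k : κ) : (blockDiag' A k).PosDef :=
  hA.submatrix sigma_mk_injective

theorem PosDef.mul_mul_conjTranspose_add {R : Type*} [CommRing R] [PartialOrder R] [StarRing R]
    [IsOrderedAddMonoid R] {m n : Type*} [Fintype m] [Fintype n]
    {M : Matrix m m R} {N : Matrix n n R} (P : Matrix n m R) (hM : M.PosDef) (hN : N.PosSemidef)
    (hker : ∀ x ≠ 0, Pᴴ *ᵥ x = 0 → 0 < star x ⬝ᵥ N *ᵥ x) :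
    (P * M * Pᴴ + N).PosDef := by
  refine of_dotProduct_mulVec_pos ((isHermitian_mul_mul_conjTranspose P hM.1).add hN.1)
    fun x hx => ?_
  have hform : star x ⬝ᵥ (P * M * Pᴴ) *ᵥ x = star (Pᴴ *ᵥ x) ⬝ᵥ M *ᵥ (Pᴴ *ᵥ x) := by
    rw [star_mulVec, conjTranspose_conjTranspose, ← mulVec_mulVec, ← mulVec_mulVec,
      dotProduct_mulVec]
  rw [add_mulVec, dotProduct_add, hform]
  by_cases h : Pᴴ *ᵥ x = 0
  · simpa [h] using hker x hx h
  · exact add_pos_of_pos_of_nonneg (hM.dotProduct_mulVec_pos h) (hN.dotProduct_mulVec_nonneg x)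

variable (β) in
def blockIndicator [DecidableEq κ] (R : Type*) [Zero R] [One R] : Matrix (Σ k, β k) κ R :=
  of fun a l => if a.1 = l then 1 else 0

@[simp]
theorem blockIndicator_apply [DecidableEq κ] (R : Type*) [Zero R] [One R] (a : Σ k, β k)
    (l : κ) : blockIndicator β R a l = if a.1 = l then 1 else 0 :=
  rfl

section Ring

variable [Fintype κ] [DecidableEq κ] {R : Type*} [Ring R]

@[simp]
theorem blockIndicator_mulVec_apply (v : κ → R) (a : Σ k, β k) :
    (blockIndicator β R *ᵥ v) a = v a.1 := by
  simp [mulVec, dotProduct]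

theorem blockIndicator_mulVec_injective [∀ k, Nonempty (β k)] :
    Function.Injective (blockIndicator β R).mulVec := fun v w h => funext fun k => by
  simpa using congrFun h ⟨k, Classical.arbitrary (β k)⟩

theorem mul_blockIndicator_apply [∀ k, Fintype (β k)] {m : Type*}
    (M : Matrix m (Σ k, β k) R) (a : m) (l : κ) :
    (M * blockIndicator β R) a l = ∑ j, M a ⟨l, j⟩ := by
  simp only [mul_apply, Fintype.sum_sigma, blockIndicator_apply]
  rw [Fintype.sum_eq_single l fun l' hl' => by simp [hl']]
  simp

theorem conjTranspose_blockIndicator_mul_apply [∀ k, Fintype (β k)] [StarRing R] {n : Type*}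
    (M : Matrix (Σ k, β k) n R) (k : κ) (b : n) :
    ((blockIndicator β R)ᴴ * M) k b = ∑ i, M ⟨k, i⟩ b := by
  simp only [mul_apply, Fintype.sum_sigma, conjTranspose_apply, blockIndicator_apply]
  rw [Fintype.sum_eq_single k fun k' hk' => by simp [hk']]
  simp

theorem blockIndicator_mul_mul_conjTranspose_apply [StarRing R] (M : Matrix κ κ R)
    (a b : Σ k, β k) :
    (blockIndicator β R * M * (blockIndicator β R)ᴴ) a b = M a.1 b.1 := by
  simp [mul_apply, apply_ite star]

theorem blockDiagonal'_sub_smul_ones [StarRing R] (M : ∀ k, Matrix (β k) (β k) R) (c : κ → R) :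
    blockDiagonal' (fun k => M k - c k • of fun _ _ => 1) =
      blockDiagonal' M - blockIndicator β R * diagonal c * (blockIndicator β R)ᴴ := by
  ext ⟨k, i⟩ ⟨l, j⟩
  rw [sub_apply, blockIndicator_mul_mul_conjTranspose_apply]
  by_cases hkl : k = l
  · subst hkl
    simp [blockDiagonal'_apply_eq]
  · simp [blockDiagonal'_apply_ne _ _ _ hkl, hkl]

end Ring

section Field

variable [∀ k, Fintype (β k)] {R : Type*} [Field R]

def blockMeans (A : Matrix (Σ k, β k) (Σ k, β k) R) : Matrix κ κ R :=
  of fun k l => 1 / ((Fintype.card (β k) : R) * Fintype.card (β l)) * ∑ i, ∑ j, A ⟨k, i⟩ ⟨l, j⟩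

theorem blockMeans_apply_of_forall_eq [CharZero R] [∀ k, Nonempty (β k)]
    {A : Matrix (Σ k, β k) (Σ k, β k) R} {k l : κ} {c : R} (h : ∀ i j, A ⟨k, i⟩ ⟨l, j⟩ = c) :
    blockMeans A k l = c := by
  simp [blockMeans, h]
  field_simp

variable [Fintype κ] [DecidableEq κ]

theorem blockMeans_eq_conjTranspose_mul_mul [StarRing R] (A : Matrix (Σ k, β k) (Σ k, β k) R) :
    blockMeans A = (blockIndicator β R * diagonal fun k => (Fintype.card (β k) : R)⁻¹)ᴴ * A *
      (blockIndicator β R * diagonal fun k => (Fintype.card (β k) : R)⁻¹) := by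
  set D : Matrix κ κ R := diagonal fun k => (Fintype.card (β k) : R)⁻¹
  have hD : Dᴴ = D := by simp [D]
  rw [conjTranspose_mul, hD]
  ext k l
  rw [show D * (blockIndicator β R)ᴴ * A * (blockIndicator β R * D) =
      D * ((blockIndicator β R)ᴴ * A * blockIndicator β R) * D by simp only [Matrix.mul_assoc]]
  simp only [D, diagonal_mul, mul_diagonal, Matrix.mul_assoc,
    conjTranspose_blockIndicator_mul_apply, mul_blockIndicator_apply, blockMeans, of_apply]
  field_simp

variable [StarRing R] [CharZero R] [∀ k, Nonempty (β k)] {A : Matrix (Σ k, β k) (Σ k, β k) R}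

theorem blockIndicator_mul_blockMeans_mul_add_blockDiagonal'
    (hoff : ∀ k l, k ≠ l → ∀ i i' j j', A ⟨k, i⟩ ⟨l, j⟩ = A ⟨k, i'⟩ ⟨l, j'⟩) :
    blockIndicator β R * blockMeans A * (blockIndicator β R)ᴴ +
      blockDiagonal' (fun k => blockDiag' A k - blockMeans A k k • of fun _ _ => 1) = A := by
  ext ⟨k, i⟩ ⟨l, j⟩
  rw [add_apply, blockIndicator_mul_mul_conjTranspose_apply]
  by_cases hkl : k = l
  · subst hkl
    simp [blockDiagonal'_apply_eq, blockDiag'_apply]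
  · simp only [blockDiagonal'_apply_ne _ _ _ hkl, add_zero]
    exact blockMeans_apply_of_forall_eq fun i' j' => hoff k l hkl i' i j' j

variable [PartialOrder R]

theorem PosDef.blockMeans (hA : A.PosDef) : (blockMeans A).PosDef := by
  rw [blockMeans_eq_conjTranspose_mul_mul]
  refine hA.conjTranspose_mul_mul_same fun v w h => ?_
  simp only [← mulVec_mulVec] at h
  funext k
  simpa [mulVec_diagonal] using congrFun (blockIndicator_mulVec_injective h) k

theorem posDef_iff_blockMeans_posDef_and_blockDiag'_posDef [IsOrderedAddMonoid R]
    (hoff : ∀ k l, k ≠ l → ∀ i i' j j', A ⟨k, i⟩ ⟨l, j⟩ = A ⟨k, i'⟩ ⟨l, j'⟩)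
    (hcent : ∀ k, (blockDiag' A k - blockMeans A k k • of fun _ _ => 1).PosSemidef) :
    A.PosDef ↔ (blockMeans A).PosDef ∧ ∀ k, (blockDiag' A k).PosDef := by
  refine ⟨fun hA => ⟨hA.blockMeans, hA.blockDiag'⟩, fun ⟨hmeans, hdiag⟩ => ?_⟩
  rw [← blockIndicator_mul_blockMeans_mul_add_blockDiagonal' hoff]
  refine hmeans.mul_mul_conjTranspose_add _ (.blockDiagonal' hcent) fun x hx hsum => ?_
  rw [blockDiagonal'_sub_smul_ones, sub_mulVec, ← mulVec_mulVec, hsum, mulVec_zero, sub_zero]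
  exact (PosDef.blockDiagonal' hdiag).dotProduct_mulVec_pos hx

end Field

end Matrix

open Matrix in
theorem blockClassG_posDef_iff_general (p : ℕ) (n : Fin p → ℕ) (hn : ∀ k, 0 < n k)
    (A : Matrix ((k : Fin p) × Fin (n k)) ((k : Fin p) × Fin (n k)) ℝ)
    (hoff : ∀ k l : Fin p, k ≠ l → ∀ (i i' : Fin (n k)) (j j' : Fin (n l)),
      A ⟨k, i⟩ ⟨l, j⟩ = A ⟨k, i'⟩ ⟨l, j'⟩)
    (hdiag : ∀ k : Fin p,
      (Matrix.of (fun i j : Fin (n k) => A ⟨k, i⟩ ⟨k, j⟩) -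
        ((∑ i : Fin (n k), ∑ j : Fin (n k), A ⟨k, i⟩ ⟨k, j⟩) / ((n k : ℝ) ^ 2)) •
          Matrix.of (fun _ _ => (1 : ℝ))).PosSemidef) :
    A.PosDef ↔
      ((Matrix.of (fun k l : Fin p => (1 / ((n k : ℝ) * (n l : ℝ))) *
          ∑ i : Fin (n k), ∑ j : Fin (n l), A ⟨k, i⟩ ⟨l, j⟩)).PosDef ∧
        ∀ k : Fin p,
          (Matrix.of (fun i j : Fin (n k) => A ⟨k, i⟩ ⟨k, j⟩)).PosDef) := by
  have : ∀ k, Nonempty (Fin (n k)) := fun k => ⟨⟨0, hn k⟩⟩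
  have hmeans : blockMeans A =
      of fun k l => 1 / ((n k : ℝ) * n l) * ∑ i, ∑ j, A ⟨k, i⟩ ⟨l, j⟩ := by
    ext k l
    simp [blockMeans]
  have hcent : ∀ k, (blockDiag' A k - blockMeans A k k • of fun _ _ => 1).PosSemidef := by
    intro k
    rw [hmeans, of_apply, one_div_mul_eq_div, ← sq]
    exact hdiag k
  rw [posDef_iff_blockMeans_posDef_and_blockDiag'_posDef hoff hcent, hmeans]
  rfl

open Matrix in
/-- Theorem 1, statement 2: for a symmetric block matrix `A` with constant
off-diagonal blocks and diagonal blocks `A_{k,k}` satisfying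
`A_{k,k} - m(A_{k,k})·J ⪰ 0` (positive semidefinite), `A` is positive definite iff the block
average matrix `φ(A)` is positive definite and every diagonal block is
positive definite. -/
theorem blockClassG_posDef_iff (p : ℕ) (n : Fin p → ℕ) (hn : ∀ k, 0 < n k)
    (A : Matrix ((k : Fin p) × Fin (n k)) ((k : Fin p) × Fin (n k)) ℝ)
    (hsymm : A.IsSymm)
    (hoff : ∀ k l : Fin p, k ≠ l → ∀ (i i' : Fin (n k)) (j j' : Fin (n l)),
      A ⟨k, i⟩ ⟨l, j⟩ = A ⟨k, i'⟩ ⟨l, j'⟩)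
    (hdiag : ∀ k : Fin p,
      (Matrix.of (fun i j : Fin (n k) => A ⟨k, i⟩ ⟨k, j⟩) -
        ((∑ i : Fin (n k), ∑ j : Fin (n k), A ⟨k, i⟩ ⟨k, j⟩) / ((n k : ℝ) ^ 2)) •
          Matrix.of (fun _ _ => (1 : ℝ))).PosSemidef) :
    A.PosDef ↔
      ((Matrix.of (fun k l : Fin p => (1 / ((n k : ℝ) * (n l : ℝ))) *
          ∑ i : Fin (n k), ∑ j : Fin (n l), A ⟨k, i⟩ ⟨l, j⟩)).PosDef ∧
        ∀ k : Fin p,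
          (Matrix.of (fun i j : Fin (n k) => A ⟨k, i⟩ ⟨k, j⟩)).PosDef) :=
  blockClassG_posDef_iff_general p n hn A hoff hdiag
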